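/- Fix w_t, w̄ ∈ ℝ^{d+1}, λ = ‖w̄ − w_t‖ > 0, step size η > 0, and difficulty score Ψ ≥ 0. Let x be a random vector, and given x choose the label y = xᵗw̄ + Ψ or y = xᵗw̄ − Ψ each with probability 1/2 independently of x. Let s = −2η(xᵗw_t − y)x be the SGD step for squared loss, and let Δ(Ψ) = E[‖w_t − w̄‖² − ‖w_t + s − w̄‖²]. Writing r = ‖x‖ and cos θ = xᵗ(w̄ − w_t)/(rλ) (for x ≠ 0), it holds that Δ(Ψ) = 4η λ² E[r² cos²θ] − 4η² λ² E[r⁴ cos²θ] − 4η² Ψ² E[r²]. -/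

import Mathlib

/-!
Expanding the square, the gain `‖wₜ - w̄‖² - ‖wₜ + s - w̄‖²` equals `2⟪s, w̄ - wₜ⟫ - ‖s‖²`.
With `y = ⟪x, w̄⟫ + εΨ` and `ε² = 1` this is a function of `x` alone plus `ε` times another
function of `x`. The second part has mean zero because `ε` is a centred sign independent of `x`,
and the first part is the stated combination once `⟪x, w̄ - wₜ⟫ = r λ cos θ` is substituted.
-/

open scoped RealInnerProductSpace
open MeasureTheory ProbabilityTheory

section InnerProduct

variable {E : Type*} [NormedAddCommGroup E] [InnerProductSpace ℝ E]

lemma norm_sub_sq_sub_norm_add_sub_sq (w w' s : E) :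
    ‖w - w'‖ ^ 2 - ‖w + s - w'‖ ^ 2 = 2 * ⟪s, w' - w⟫ - ‖s‖ ^ 2 := by
  rw [show w + s - w' = s - (w' - w) by abel, show w - w' = -(w' - w) by abel, norm_neg,
    norm_sub_sq_real s]
  ring

lemma sgd_gain_eq (w w' x : E) {η Ψ ε : ℝ} (hε : ε ^ 2 = 1) :
    ‖w - w'‖ ^ 2 - ‖w + (-(2 * η * (⟪x, w⟫ - (⟪x, w'⟫ + ε * Ψ)))) • x - w'‖ ^ 2
      = (4 * η * ⟪x, w' - w⟫ ^ 2 - 4 * η ^ 2 * ‖x‖ ^ 2 * ⟪x, w' - w⟫ ^ 2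
          - 4 * η ^ 2 * Ψ ^ 2 * ‖x‖ ^ 2)
        + ε * (Ψ * (4 * η - 8 * η ^ 2 * ‖x‖ ^ 2) * ⟪x, w' - w⟫) := by
  rw [norm_sub_sq_sub_norm_add_sub_sq, real_inner_smul_left, norm_smul, mul_pow,
    Real.norm_eq_abs, sq_abs, inner_sub_right]
  linear_combination (-4 * η ^ 2 * Ψ ^ 2 * ‖x‖ ^ 2) * hε

/-- `⟪x, v⟫ = ‖x‖ c cos θ`, squared; it holds also at `x = 0`, where `cos θ` is the junk value
`0 / 0 = 0`. -/
lemma inner_sq_eq_mul_norm_sq_mul_cos_sq (x v : E) {c : ℝ} (hc : c ≠ 0) :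
    ⟪x, v⟫ ^ 2 = c ^ 2 * (‖x‖ ^ 2 * (⟪x, v⟫ / (‖x‖ * c)) ^ 2) := by
  rcases eq_or_ne x 0 with rfl | hx
  · simp
  · have : ‖x‖ ≠ 0 := norm_ne_zero_iff.mpr hx
    field_simp

end InnerProduct

section Rademacher

variable {Ω : Type*} [MeasurableSpace Ω] {μ : Measure Ω} [IsProbabilityMeasure μ] {ε : Ω → ℝ}

lemma integral_eq_zero_of_sign_of_measure_eq_half (hε : Measurable ε)
    (hεval : ∀ ω, ε ω = 1 ∨ ε ω = -1) (hεhalf : μ {ω | ε ω = 1} = 1 / 2) :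
    ∫ ω, ε ω ∂μ = 0 := by
  have hA : MeasurableSet {ω | ε ω = 1} := hε (measurableSet_singleton 1)
  have hεind : ε = fun ω => {ω | ε ω = 1}.indicator (fun _ => (2 : ℝ)) ω - 1 := by
    funext ω
    rcases hεval ω with hsign | hsign <;> simp [Set.indicator, hsign] <;> norm_num
  rw [hεind, integral_sub ((integrable_const 2).indicator hA) (integrable_const 1),
    integral_indicator_const _ hA, measureReal_def, hεhalf]
  simp

lemma integral_sign_mul_comp_eq_zero {F : Type*} [MeasurableSpace F] {X : Ω → F} {φ : F → ℝ}
    (hε : Measurable ε) (hεval : ∀ ω, ε ω = 1 ∨ ε ω = -1) (hεhalf : μ {ω | ε ω = 1} = 1 / 2)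
    (hindep : IndepFun ε X μ) (hX : Measurable X) (hφ : Measurable φ) :
    ∫ ω, ε ω * φ (X ω) ∂μ = 0 := by
  have hmean := integral_eq_zero_of_sign_of_measure_eq_half hε hεval hεhalf
  simpa [hmean] using (hindep.comp measurable_id hφ).integral_fun_mul_eq_mul_integral
    hε.aestronglyMeasurable (hφ.comp hX).aestronglyMeasurable

end Rademacher

theorem stmt2_general {d : ℕ} {Ω : Type*} [MeasurableSpace Ω] (μ : Measure Ω) [IsProbabilityMeasure μ]
    (wt wbar : EuclideanSpace ℝ (Fin (d + 1)))
    (lam η Ψ : ℝ) (hlam_pos : 0 < lam)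
    (x : Ω → EuclideanSpace ℝ (Fin (d + 1))) (ε : Ω → ℝ)
    (hx : Measurable x) (hε : Measurable ε)
    (hεval : ∀ ω, ε ω = 1 ∨ ε ω = -1)
    (hεhalf : μ {ω | ε ω = 1} = 1 / 2)
    (hindep : IndepFun ε x μ)
    (y : Ω → ℝ) (hy : ∀ ω, y ω = ⟪x ω, wbar⟫ + ε ω * Ψ)
    (s : Ω → EuclideanSpace ℝ (Fin (d + 1)))
    (hs : ∀ ω, s ω = (-(2 * η * (⟪x ω, wt⟫ - y ω))) • x ω)
    (r : Ω → ℝ) (hr : ∀ ω, r ω = ‖x ω‖)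
    (cosθ : Ω → ℝ) (hcos : ∀ ω, cosθ ω = ⟪x ω, wbar - wt⟫ / (r ω * lam))
    (hInt1 : Integrable (fun ω => r ω ^ 2 * cosθ ω ^ 2) μ)
    (hInt2 : Integrable (fun ω => r ω ^ 4 * cosθ ω ^ 2) μ)
    (hInt3 : Integrable (fun ω => r ω ^ 2) μ)
    (hInt5 : Integrable (fun ω => ‖wt - wbar‖ ^ 2 - ‖(wt + s ω) - wbar‖ ^ 2) μ) :
    ∫ ω, (‖wt - wbar‖ ^ 2 - ‖(wt + s ω) - wbar‖ ^ 2) ∂μ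
      = 4 * η * lam ^ 2 * ∫ ω, r ω ^ 2 * cosθ ω ^ 2 ∂μ
        - 4 * η ^ 2 * lam ^ 2 * ∫ ω, r ω ^ 4 * cosθ ω ^ 2 ∂μ
        - 4 * η ^ 2 * Ψ ^ 2 * ∫ ω, r ω ^ 2 ∂μ := by
  set φ : EuclideanSpace ℝ (Fin (d + 1)) → ℝ :=
    fun z => Ψ * (4 * η - 8 * η ^ 2 * ‖z‖ ^ 2) * ⟪z, wbar - wt⟫
  set h : Ω → ℝ := fun ω => 4 * η * lam ^ 2 * (r ω ^ 2 * cosθ ω ^ 2)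
    - 4 * η ^ 2 * lam ^ 2 * (r ω ^ 4 * cosθ ω ^ 2) - 4 * η ^ 2 * Ψ ^ 2 * r ω ^ 2
  have hgain : ∀ ω, ‖wt - wbar‖ ^ 2 - ‖(wt + s ω) - wbar‖ ^ 2 = h ω + ε ω * φ (x ω) := by
    intro ω
    have hcos2 := inner_sq_eq_mul_norm_sq_mul_cos_sq (x ω) (wbar - wt) hlam_pos.ne'
    have hε2 : ε ω ^ 2 = 1 := by rcases hεval ω with hsign | hsign <;> simp [hsign]
    rw [hs, hy, sgd_gain_eq _ _ _ hε2, hcos2]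
    simp only [h, φ, hcos, hr]
    ring
  have hh : Integrable h μ :=
    ((hInt1.const_mul _).sub' (hInt2.const_mul _)).sub' (hInt3.const_mul _)
  have hφ : Measurable φ := by fun_prop
  calc ∫ ω, (‖wt - wbar‖ ^ 2 - ‖(wt + s ω) - wbar‖ ^ 2) ∂μ
      = ∫ ω, h ω ∂μ + ∫ ω, ε ω * φ (x ω) ∂μ := by
        simp_rw [hgain] at hInt5 ⊢
        exact integral_add hh ((hInt5.sub hh).congr (.of_forall fun ω => by simp))
    _ = ∫ ω, h ω ∂μ := by
        rw [integral_sign_mul_comp_eq_zero hε hεval hεhalf hindep hx hφ, add_zero]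
    _ = _ := by
        simp only [h]
        rw [integral_sub ((hInt1.const_mul _).sub' (hInt2.const_mul _)) (hInt3.const_mul _),
          integral_sub (hInt1.const_mul _) (hInt2.const_mul _), integral_const_mul,
          integral_const_mul, integral_const_mul]

/-- closed form for the expected one-step convergence rate of SGD on squared loss
with random data point `x` and label `y = ⟪x, w̄⟫ ± Ψ` (sign `ε = ±1` uniform, independent of
`x`):  `Δ(Ψ) = 4ηλ²E[r²cos²θ] − 4η²λ²E[r⁴cos²θ] − 4η²Ψ²E[r²]`. -/
theorem stmt2 {d : ℕ} {Ω : Type*} [MeasurableSpace Ω] (μ : Measure Ω) [IsProbabilityMeasure μ]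
    (wt wbar : EuclideanSpace ℝ (Fin (d + 1)))
    (lam η Ψ : ℝ) (hlam : lam = ‖wbar - wt‖) (hlam_pos : 0 < lam) (hη : 0 < η) (hΨ : 0 ≤ Ψ)
    (x : Ω → EuclideanSpace ℝ (Fin (d + 1))) (ε : Ω → ℝ)
    (hx : Measurable x) (hε : Measurable ε)
    (hεval : ∀ ω, ε ω = 1 ∨ ε ω = -1)
    (hεhalf : μ {ω | ε ω = 1} = 1 / 2)
    (hindep : IndepFun ε x μ)
    (y : Ω → ℝ) (hy : ∀ ω, y ω = ⟪x ω, wbar⟫ + ε ω * Ψ)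
    (s : Ω → EuclideanSpace ℝ (Fin (d + 1)))
    (hs : ∀ ω, s ω = (-(2 * η * (⟪x ω, wt⟫ - y ω))) • x ω)
    (r : Ω → ℝ) (hr : ∀ ω, r ω = ‖x ω‖)
    (cosθ : Ω → ℝ) (hcos : ∀ ω, cosθ ω = ⟪x ω, wbar - wt⟫ / (r ω * lam))
    (hInt1 : Integrable (fun ω => r ω ^ 2 * cosθ ω ^ 2) μ)
    (hInt2 : Integrable (fun ω => r ω ^ 4 * cosθ ω ^ 2) μ)
    (hInt3 : Integrable (fun ω => r ω ^ 2) μ)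
    (hInt4 : Integrable (fun ω => r ω ^ 4) μ)
    (hInt5 : Integrable (fun ω => ‖wt - wbar‖ ^ 2 - ‖(wt + s ω) - wbar‖ ^ 2) μ) :
    ∫ ω, (‖wt - wbar‖ ^ 2 - ‖(wt + s ω) - wbar‖ ^ 2) ∂μ
      = 4 * η * lam ^ 2 * ∫ ω, r ω ^ 2 * cosθ ω ^ 2 ∂μ
        - 4 * η ^ 2 * lam ^ 2 * ∫ ω, r ω ^ 4 * cosθ ω ^ 2 ∂μ
        - 4 * η ^ 2 * Ψ ^ 2 * ∫ ω, r ω ^ 2 ∂μ :=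
  stmt2_general μ wt wbar lam η Ψ hlam_pos x ε hx hε hεval hεhalf hindep y hy s hs r hr cosθ hcos
    hInt1 hInt2 hInt3 hInt5
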